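/- arXiv:2106.03202 — 10 statements merged into one kernel-verified Lean document; each statement's English description precedes it below -/
import Mathlib

section
/- For every n ≥ -1, the n-th singular word w_n of the Fibonacci word is closed, i.e., w_n is a single letter or has a border that occurs exactly twice in w_n (as prefix and suffix). -/
/-- Finite Fibonacci words, shifted: `fw n` is the paper's `f_{n-1}`
(so `fw 0 = f₋₁ = 1`, `fw 1 = f₀ = 0`, `fw (n+2) = fw (n+1) ++ fw n`). -/
def fw : ℕ → List ℕ
  | 0 => [1]
  | 1 => [0]
  | n+2 => fw (n+1) ++ fw n

/-- The penultimate letter of a word (default 0). -/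
def penult (l : List ℕ) : ℕ := l.dropLast.getLastD 0

/-- Singular words, shifted: `sw n` is the paper's `w_{n-2}`
(so `sw 0 = w₋₂ = ε`, `sw 1 = w₋₁ = 0`, `sw 2 = w₀ = 1`, and for the paper's
`n ≥ 1`, `w_n = sw (n+2) = a · f_n · b⁻¹` where `ab` is the length-2 suffix of `f_n`). -/
def sw : ℕ → List ℕ
  | 0 => []
  | 1 => [0]
  | 2 => [1]
  | n+3 => penult (fw (n+2)) :: (fw (n+2)).dropLast

/-- Number of occurrences of `x` as a factor of `w` (counted by starting position). -/
def occ (x w : List ℕ) : ℕ :=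
  ((List.range (w.length + 1)).filter (fun i => x.isPrefixOf (w.drop i))).length

/-- A word is closed if it is a single letter or has a border (a proper factor that
is both a prefix and a suffix) occurring exactly twice in it. -/
def ClosedWord (w : List ℕ) : Prop :=
  w.length = 1 ∨
    ∃ x : List ℕ, x ≠ [] ∧ x.length < w.length ∧ x <+: w ∧ x <:+ w ∧ occ x w = 2

lemma fw_ne_nil : ∀ n, fw n ≠ []
  | 0 => by simp [fw]
  | 1 => by simp [fw]
  | n+2 => by simp [fw, fw_ne_nil (n+1)]

lemma fw_alt : ∀ k, ∃ a b : ℕ, ([a,b] <:+ fw (k+2)) ∧ ([b,a] <:+ fw (k+3))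
  | 0 => ⟨0, 1, by decide, by decide⟩
  | k+1 => by
    obtain ⟨a, b, h1, h2⟩ := fw_alt k
    refine ⟨b, a, h2, ?_⟩
    obtain ⟨t, ht⟩ := h1
    exact ⟨fw (k+3) ++ t, by rw [show fw (k+4) = fw (k+3) ++ fw (k+2) from rfl, ← ht]; simp⟩

lemma penult_eq {a b : ℕ} {w : List ℕ} (h : [a,b] <:+ w) : penult w = a := by
  obtain ⟨t, rfl⟩ := h
  show (t ++ [a,b]).dropLast.getLastD 0 = a
  rw [show t ++ [a,b] = (t ++ [a]) ++ [b] by simp, List.dropLast_concat, List.getLastD_concat]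

lemma eq_dropLast_concat {a b : ℕ} {w : List ℕ} (h : [a,b] <:+ w) :
    w = w.dropLast ++ [b] := by
  obtain ⟨t, rfl⟩ := h
  rw [show t ++ [a,b] = (t ++ [a]) ++ [b] by simp, List.dropLast_concat]

lemma sw_rec : ∀ k, sw (k+3) = sw (k+1) ++ sw k ++ sw (k+1)
  | 0 => by decide
  | 1 => by decide
  | 2 => by decide
  | k+3 => by
    obtain ⟨a, b, h1, h2⟩ := fw_alt k
    have h4 : [b,a] <:+ fw (k+5) := by
      obtain ⟨t, ht⟩ := h2
      exact ⟨fw (k+4) ++ t, by rw [show fw (k+5) = fw (k+4) ++ fw (k+3) from rfl, ← ht]; simp⟩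
    have e5 : fw (k+5) = fw (k+3) ++ fw (k+2) ++ fw (k+3) := by
      rw [show fw (k+5) = fw (k+4) ++ fw (k+3) from rfl,
        show fw (k+4) = fw (k+3) ++ fw (k+2) from rfl]
    have p5 : penult (fw (k+5)) = b := penult_eq h4
    have p3 : penult (fw (k+3)) = b := penult_eq h2
    have p2 : penult (fw (k+2)) = a := penult_eq h1
    have c3 : fw (k+3) = (fw (k+3)).dropLast ++ [a] := eq_dropLast_concat h2
    have c2 : fw (k+2) = (fw (k+2)).dropLast ++ [b] := eq_dropLast_concat h1
    have e5' : (fw (k+5)).dropLast = fw (k+3) ++ fw (k+2) ++ (fw (k+3)).dropLast := by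
      have hne : fw (k+2) ++ fw (k+3) ≠ [] := by simp [fw_ne_nil]
      rw [e5, List.append_assoc, List.dropLast_append_of_ne_nil hne,
        List.dropLast_append_of_ne_nil (fw_ne_nil _), List.append_assoc]
    show penult (fw (k+5)) :: (fw (k+5)).dropLast
        = (penult (fw (k+3)) :: (fw (k+3)).dropLast) ++ (penult (fw (k+2)) :: (fw (k+2)).dropLast)
          ++ (penult (fw (k+3)) :: (fw (k+3)).dropLast)
    rw [p5, p3, p2, e5']
    set D3 := (fw (k+3)).dropLast with hD3
    set D2 := (fw (k+2)).dropLast with hD2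
    rw [c3, c2]
    simp

lemma sw_length : ∀ k, (sw k).length = Nat.fib k
  | 0 => rfl
  | 1 => rfl
  | 2 => rfl
  | k+3 => by
    have h1 : Nat.fib (k+2) = Nat.fib k + Nat.fib (k+1) := Nat.fib_add_two
    have h2 : Nat.fib (k+3) = Nat.fib (k+1) + Nat.fib (k+2) := Nat.fib_add_two
    rw [sw_rec k]
    simp [sw_length (k+1), sw_length k]
    omega

lemma sw_rev : ∀ k, (sw k).reverse = sw k
  | 0 => rfl
  | 1 => rfl
  | 2 => rfl
  | k+3 => by
    rw [sw_rec k]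
    simp [List.reverse_append, sw_rev (k+1), sw_rev k]

lemma sw_ne_nil (k : ℕ) : sw (k+1) ≠ [] := by
  intro h
  have h1 := sw_length (k+1)
  rw [h] at h1
  have : 0 < Nat.fib (k+1) := Nat.fib_pos.mpr (by omega)
  simp at h1
  omega

lemma Rlem : ∀ k, sw (k+3) ≠ sw (k+1) ++ sw (k+2)
  | 0 => by decide
  | k+1 => by
    intro h
    rw [sw_rec (k+1)] at h
    rw [List.append_assoc] at h
    exact Rlem k (List.append_cancel_left h).symm

lemma occA {x w : List ℕ} {p : ℕ} (h : x <+: w.drop p) :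
    ∀ i, i < x.length → w[p+i]? = x[i]? := by
  intro i hi
  obtain ⟨t, ht⟩ := h
  rw [← List.getElem?_drop, ← ht, List.getElem?_append_left hi]

lemma occB {x w : List ℕ} {p : ℕ}
    (h : ∀ i, i < x.length → w[p+i]? = x[i]?) : x <+: w.drop p := by
  rw [List.prefix_iff_eq_take]
  apply List.ext_getElem?
  intro i
  rcases lt_or_ge i x.length with hi | hi
  · rw [List.getElem?_take_of_lt hi, List.getElem?_drop, h i hi]
  · rw [List.getElem?_eq_none hi, List.getElem?_eq_none (by simp; omega)]

lemma occ_reflect {x w : List ℕ} (hx : x.reverse = x) (hw : w.reverse = w) {p : ℕ}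
    (h : x <+: w.drop p) : x <+: w.drop (w.length - x.length - p) := by
  obtain ⟨t, ht⟩ := h
  have hw2 : w = w.take p ++ (x ++ t) := by rw [ht, List.take_append_drop]
  have hlen : t.length = w.length - x.length - p := by
    have h1 := congrArg List.length hw2
    simp [List.length_take] at h1
    omega
  have key : w = t.reverse ++ (x ++ (w.take p).reverse) := calc
    w = (w.take p ++ (x ++ t)).reverse := by rw [← hw2, hw]
    _ = t.reverse ++ (x ++ (w.take p).reverse) := by
        simp [List.reverse_append, hx, List.append_assoc]
  refine ⟨(w.take p).reverse, ?_⟩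
  rw [← hlen]
  conv_rhs => rw [key]
  exact (List.drop_left' (by simp)).symm

lemma prefix_trunc {x u v : List ℕ} (h : x <+: u ++ v) (hl : x.length ≤ u.length) :
    x <+: u := by
  rw [List.prefix_iff_eq_take] at h ⊢
  have h2 : (u ++ v).take x.length = u.take x.length := by
    rw [List.take_append]
    simp [Nat.sub_eq_zero_of_le hl]
  exact h.trans h2

lemma filter_one (L : ℕ) (hL : 1 ≤ L) :
    ∀ M, M ≤ L → (List.range M).filter (fun i => decide (i = 0 ∨ i = L)) = if M = 0 then [] else [0]
  | 0, _ => by simp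
  | M+1, hM => by
    rw [List.range_succ, List.filter_append, filter_one L hL M (by omega)]
    rcases Nat.eq_zero_or_pos M with h0 | h0
    · subst h0; simp
    · have : ¬ (M = 0 ∨ M = L) := by omega
      simp only [List.filter_cons, List.filter_nil, decide_eq_true_eq, this, if_neg, ite_false]
      simp [h0, Nat.pos_iff_ne_zero.mp h0, this]

lemma filter_two (L N : ℕ) (h1 : 1 ≤ L) (h2 : L < N) :
    (List.range N).filter (fun i => decide (i = 0 ∨ i = L)) = [0, L] := by
  induction N with
  | zero => omega
  | succ N ih =>
    rw [List.range_succ, List.filter_append]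
    rcases Nat.lt_or_ge L N with hLN | hLN
    · have : ¬ (N = 0 ∨ N = L) := by omega
      rw [ih hLN]
      simp [this]
    · have hNL : N = L := by omega
      subst hNL
      rw [filter_one N h1 N le_rfl]
      simp [Nat.pos_iff_ne_zero.mp (by omega : 0 < N)]

lemma occ_two {x w : List ℕ} (L : ℕ) (h1 : 1 ≤ L) (h2 : L < w.length + 1)
    (hocc : ∀ p, (x <+: w.drop p) ↔ (p = 0 ∨ p = L)) : occ x w = 2 := by
  unfold occ
  rw [List.filter_congr (fun i _ => ?_), filter_two L (w.length+1) h1 h2]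
  · rfl
  · have := hocc i
    simp only [← this]
    rw [Bool.eq_iff_iff]
    simp

lemma fib_mod2 : ∀ n, Nat.fib n % 2 = if n % 3 = 0 then 0 else 1 := by
  intro n
  induction n using Nat.strong_induction_on with
  | _ n IH =>
    match n with
    | 0 => simp
    | 1 => simp
    | m+2 =>
      have h1 := IH m (by omega)
      have h2 := IH (m+1) (by omega)
      rw [Nat.fib_add_two]
      split at h1 <;> split at h2 <;> split <;> omega

lemma sw_center : ∀ m,
    (m % 3 = 1 → ∃ t, Nat.fib m = 2*t+1 ∧ (sw m)[t]? = some 0) ∧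
    (m % 3 = 2 → ∃ t, Nat.fib m = 2*t+1 ∧ (sw m)[t]? = some 1)
  | 0 => ⟨fun h => absurd h (by decide), fun h => absurd h (by decide)⟩
  | 1 => ⟨fun _ => ⟨0, by decide, by decide⟩, fun h => absurd h (by decide)⟩
  | 2 => ⟨fun h => absurd h (by decide), fun _ => ⟨0, by decide, by decide⟩⟩
  | m+3 => by
    have f2 : Nat.fib (m+2) = Nat.fib m + Nat.fib (m+1) := Nat.fib_add_two
    have f3 : Nat.fib (m+3) = Nat.fib (m+1) + Nat.fib (m+2) := Nat.fib_add_two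
    constructor
    · intro h
      obtain ⟨t, ht1, ht2⟩ := (sw_center m).1 (by omega)
      refine ⟨Nat.fib (m+1) + t, by omega, ?_⟩
      rw [sw_rec m, List.getElem?_append_left (by simp [sw_length]; omega),
        List.getElem?_append_right (by simp [sw_length]),
        sw_length, show Nat.fib (m+1) + t - Nat.fib (m+1) = t from by omega, ht2]
    · intro h
      obtain ⟨t, ht1, ht2⟩ := (sw_center m).2 (by omega)
      refine ⟨Nat.fib (m+1) + t, by omega, ?_⟩
      rw [sw_rec m, List.getElem?_append_left (by simp [sw_length]; omega),
        List.getElem?_append_right (by simp [sw_length]),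
        sw_length, show Nat.fib (m+1) + t - Nat.fib (m+1) = t from by omega, ht2]

def Pst (k : ℕ) : Prop :=
  ∀ p : ℕ, sw (k+1) <+: (sw (k+3)).drop p → p = 0 ∨ p = Nat.fib (k+2)

lemma per_contra (j : ℕ) (hP : Pst j) (d : ℕ) (hd1 : 1 ≤ d) (hd2 : d < Nat.fib (j+2))
    (hper : ∀ i, i + d < Nat.fib (j+3) → (sw (j+3))[i]? = (sw (j+3))[i+d]?) : False := by
  have f2 : Nat.fib (j+2) = Nat.fib j + Nat.fib (j+1) := Nat.fib_add_two
  have f3 : Nat.fib (j+3) = Nat.fib (j+1) + Nat.fib (j+2) := Nat.fib_add_two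
  have hocc : sw (j+1) <+: (sw (j+3)).drop (Nat.fib (j+2) - d) := by
    apply occB
    intro i hi
    rw [sw_length] at hi
    rw [hper _ (by omega),
      show Nat.fib (j+2) - d + i + d = Nat.fib (j+2) + i from by omega]
    conv_lhs => rw [sw_rec j]
    rw [List.getElem?_append_right (by simp [sw_length]; omega),
      show Nat.fib (j+2) + i - (sw (j+1) ++ sw j).length = i from by simp [sw_length]; omega]
  rcases hP _ hocc with h | h <;> omega

lemma Tlem (j : ℕ) (hP : Pst j) : ¬ sw (j+3) <:+: sw (j+4) := by
  intro hinf
  have f2 : Nat.fib (j+2) = Nat.fib j + Nat.fib (j+1) := Nat.fib_add_two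
  have f3 : Nat.fib (j+3) = Nat.fib (j+1) + Nat.fib (j+2) := Nat.fib_add_two
  have f4 : Nat.fib (j+4) = Nat.fib (j+2) + Nat.fib (j+3) := Nat.fib_add_two
  have hp1 : 0 < Nat.fib (j+1) := Nat.fib_pos.mpr (by omega)
  have hp2 : 0 < Nat.fib (j+2) := Nat.fib_pos.mpr (by omega)
  obtain ⟨s, t, hst⟩ := hinf
  have hlen : s.length + Nat.fib (j+3) + t.length = Nat.fib (j+4) := by
    have := congrArg List.length hst
    simp [sw_length] at this
    omega
  have hocc0 : sw (j+3) <+: (sw (j+4)).drop s.length := by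
    refine ⟨t, ?_⟩
    conv_rhs => rw [← hst]
    rw [List.append_assoc, List.drop_left' rfl]
  have hocc1 : sw (j+3) <+: (sw (j+4)).drop (Nat.fib (j+2) - s.length) := by
    have h := occ_reflect (sw_rev _) (sw_rev _) hocc0
    rw [sw_length, sw_length,
      show Nat.fib (j+4) - Nat.fib (j+3) - s.length = Nat.fib (j+2) - s.length from by omega] at h
    exact h
  have prefCase : ¬ sw (j+3) <+: sw (j+4) := by
    intro hpre
    obtain ⟨t', ht'⟩ := hpre
    rw [show sw (j+4) = sw (j+2) ++ sw (j+1) ++ sw (j+2) from sw_rec (j+1)] at ht'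
    have heq := List.append_inj_left ht'.symm (by simp [sw_length]; omega)
    have hrev := congrArg List.reverse heq
    rw [sw_rev, List.reverse_append, sw_rev, sw_rev] at hrev
    exact Rlem j hrev.symm
  set q0 := s.length with hq0
  have hq0le : q0 ≤ Nat.fib (j+2) := by omega
  rcases Nat.lt_trichotomy q0 (Nat.fib (j+2) - q0) with hlt | heq | hgt
  · by_cases hq00 : q0 = 0
    · apply prefCase
      rw [hq00] at hocc0
      simpa using hocc0
    · set d := Nat.fib (j+2) - q0 - q0 with hd
      apply per_contra j hP d (by omega) (by omega)
      intro i hid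
      have h1 := occA hocc1 i (by rw [sw_length]; omega)
      have h2 := occA hocc0 (i+d) (by rw [sw_length]; omega)
      rw [← h1, ← h2]
      congr 1
      omega
  · have h2q : 2 * q0 = Nat.fib (j+2) := by omega
    have hmod : (j+2) % 3 = 0 := by
      have hf := fib_mod2 (j+2)
      split at hf
      · assumption
      · omega
    obtain ⟨tB, htB1, htB2⟩ := (sw_center (j+3)).1 (by omega)
    obtain ⟨tA, htA1, htA2⟩ := (sw_center (j+4)).2 (by omega)
    have h := occA hocc0 tB (by rw [sw_length]; omega)
    rw [htB2, show q0 + tB = tA from by omega, htA2] at h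
    simp at h
  · by_cases hq10 : Nat.fib (j+2) - q0 = 0
    · apply prefCase
      have hq0f : q0 = Nat.fib (j+2) := by omega
      rw [hq10] at hocc1
      simpa using hocc1
    · set d := q0 - (Nat.fib (j+2) - q0) with hd
      apply per_contra j hP d (by omega) (by omega)
      intro i hid
      have h1 := occA hocc0 i (by rw [sw_length]; omega)
      have h2 := occA hocc1 (i+d) (by rw [sw_length]; omega)
      rw [← h1, ← h2]
      congr 1
      omega

theorem Pall : ∀ k, Pst k := by
  intro k
  induction k using Nat.strong_induction_on with
  | _ k IH =>
    rcases k with _ | _ | _ | n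
    · intro p hp
      have hl := hp.length_le
      rw [show (sw 1).length = 1 from rfl] at hl
      have : p ≤ 1 := by
        rw [List.length_drop, show (sw 3).length = 2 from rfl] at hl
        omega
      interval_cases p
      · exact Or.inl rfl
      · exact Or.inr (by decide)
    · intro p hp
      have hl := hp.length_le
      rw [show (sw 2).length = 1 from rfl] at hl
      have : p ≤ 2 := by
        rw [List.length_drop, show (sw 4).length = 3 from rfl] at hl
        omega
      interval_cases p
      · exact Or.inl rfl
      · exact absurd hp (by decide)
      · exact Or.inr (by decide)
    · intro p hp
      have hl := hp.length_le
      rw [show (sw 3).length = 2 from rfl] at hl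
      have : p ≤ 3 := by
        rw [List.length_drop, show (sw 5).length = 5 from rfl] at hl
        omega
      interval_cases p
      · exact Or.inl rfl
      · exact absurd hp (by decide)
      · exact absurd hp (by decide)
      · exact Or.inr (by decide)
    · -- general case k = n+3
      intro p hp
      replace hp : sw (n+4) <+: (sw (n+6)).drop p := hp
      show p = 0 ∨ p = Nat.fib (n+5)
      have f2 : Nat.fib (n+2) = Nat.fib n + Nat.fib (n+1) := Nat.fib_add_two
      have f3 : Nat.fib (n+3) = Nat.fib (n+1) + Nat.fib (n+2) := Nat.fib_add_two
      have f4 : Nat.fib (n+4) = Nat.fib (n+2) + Nat.fib (n+3) := Nat.fib_add_two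
      have f5 : Nat.fib (n+5) = Nat.fib (n+3) + Nat.fib (n+4) := Nat.fib_add_two
      have f6 : Nat.fib (n+6) = Nat.fib (n+4) + Nat.fib (n+5) := Nat.fib_add_two
      have hp1 : 0 < Nat.fib (n+1) := Nat.fib_pos.mpr (by omega)
      have hp2 : 0 < Nat.fib (n+2) := Nat.fib_pos.mpr (by omega)
      have hplen : p + Nat.fib (n+4) ≤ Nat.fib (n+6) := by
        have hl := hp.length_le
        rw [List.length_drop, sw_length, sw_length] at hl
        omega
      by_contra hcon
      push_neg at hcon
      obtain ⟨hp0, hpL⟩ := hcon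
      have e44 : sw (n+4) = sw (n+2) ++ sw (n+1) ++ sw (n+2) := sw_rec (n+1)
      have e66 : sw (n+6) = sw (n+4) ++ sw (n+3) ++ sw (n+4) := sw_rec (n+3)
      obtain ⟨q, hq, hq1, hq2⟩ :
          ∃ q, (sw (n+4) <+: (sw (n+6)).drop q) ∧ 1 ≤ q ∧ q < Nat.fib (n+4) := by
        rcases Nat.lt_or_ge p (Nat.fib (n+4)) with h | h
        · exact ⟨p, hp, by omega, h⟩
        · refine ⟨Nat.fib (n+5) - p, ?_, by omega, by omega⟩
          have hr := occ_reflect (sw_rev _) (sw_rev _) hp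
          rw [sw_length, sw_length,
            show Nat.fib (n+6) - Nat.fib (n+4) - p = Nat.fib (n+5) - p from by omega] at hr
          exact hr
      have hWq : (sw (n+6)).drop q = (sw (n+4)).drop q ++ (sw (n+3) ++ sw (n+4)) := by
        rw [e66, List.drop_append, List.drop_append,
          show q - (sw (n+4)).length = 0 from by rw [sw_length]; omega,
          show q - (sw (n+4) ++ sw (n+3)).length = 0 from by
            simp [sw_length]; omega,
          List.drop_zero, List.drop_zero, List.append_assoc]
      rcases le_or_gt q (Nat.fib (n+3)) with hcase | hcase
      · -- small q
        have pre24 : sw (n+2) <+: sw (n+4) := by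
          rw [e44]
          exact (List.prefix_append _ _).trans (List.prefix_append _ _)
        have hC : sw (n+2) <+: (sw (n+4)).drop q := by
          apply prefix_trunc (v := sw (n+3) ++ sw (n+4))
          · rw [← hWq]
            exact pre24.trans hq
          · rw [List.length_drop, sw_length, sw_length]
            omega
        have hq03 := IH (n+1) (by omega) q hC
        have hqe : q = Nat.fib (n+3) := by
          rcases hq03 with h | h
          · omega
          · exact h.trans rfl
        subst hqe
        have hA4 : (sw (n+4)).drop (Nat.fib (n+3)) = sw (n+2) := by
          rw [e44]
          exact List.drop_left' (by simp [sw_length]; omega)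
        rw [hWq, hA4] at hq
        obtain ⟨t, ht⟩ := hq
        rw [show sw (n+2) ++ (sw (n+3) ++ sw (n+4)) = (sw (n+2) ++ sw (n+3)) ++ sw (n+4) from by
          simp [List.append_assoc]] at ht
        have heq := List.append_inj_left ht.symm (by simp [sw_length]; omega)
        exact Rlem (n+1) heq.symm
      · -- large q: infix contradiction
        obtain ⟨t, ht⟩ := hq
        rw [hWq] at ht
        have hpre : (sw (n+4)).drop q ++ sw (n+3) <+: sw (n+4) := by
          apply prefix_trunc (u := sw (n+4)) (v := t)
          · rw [ht]
            exact ⟨sw (n+4), by simp [List.append_assoc]⟩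
          · simp [sw_length, List.length_drop]
            omega
        obtain ⟨z, hz⟩ := hpre
        exact Tlem n (IH n (by omega)) ⟨(sw (n+4)).drop q, z, hz⟩

lemma sw_prefix (n : ℕ) : sw (n+1) <+: sw (n+3) := by
  rw [sw_rec n]
  exact (List.prefix_append _ _).trans (List.prefix_append _ _)

lemma sw_drop (n : ℕ) : (sw (n+3)).drop (Nat.fib (n+2)) = sw (n+1) := by
  have f2 : Nat.fib (n+2) = Nat.fib n + Nat.fib (n+1) := Nat.fib_add_two
  rw [sw_rec n]
  exact List.drop_left' (by simp [sw_length]; omega)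

lemma occ_final (n : ℕ) : occ (sw (n+1)) (sw (n+3)) = 2 := by
  have f2 : Nat.fib (n+2) = Nat.fib n + Nat.fib (n+1) := Nat.fib_add_two
  have f3 : Nat.fib (n+3) = Nat.fib (n+1) + Nat.fib (n+2) := Nat.fib_add_two
  have hp1 : 0 < Nat.fib (n+1) := Nat.fib_pos.mpr (by omega)
  apply occ_two (L := Nat.fib (n+2))
  · omega
  · rw [sw_length]; omega
  · intro p
    constructor
    · exact Pall n p
    · rintro (rfl | rfl)
      · simpa using sw_prefix n
      · rw [sw_drop n]

/-- for every `n ≥ -1`, the singular word `w_n` is closed. -/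
theorem singular_words_closed : ∀ n : ℕ, ClosedWord (sw (n + 1)) := by
  intro n
  rcases n with _ | _ | m
  · exact Or.inl rfl
  · exact Or.inl rfl
  · show ClosedWord (sw (m+3))
    refine Or.inr ⟨sw (m+1), sw_ne_nil m, ?_, sw_prefix m, ?_, occ_final m⟩
    · have f2 : Nat.fib (m+2) = Nat.fib m + Nat.fib (m+1) := Nat.fib_add_two
      have f3 : Nat.fib (m+3) = Nat.fib (m+1) + Nat.fib (m+2) := Nat.fib_add_two
      have hp1 : 0 < Nat.fib (m+1) := Nat.fib_pos.mpr (by omega)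
      have hp2 : 0 < Nat.fib (m+2) := Nat.fib_pos.mpr (by omega)
      rw [sw_length, sw_length]
      omega
    · exact ⟨sw (m+1) ++ sw m, (sw_rec m).symm⟩
end

section
/- For all n ≥ 1, the singular word w_n of the Fibonacci word satisfies w_n = w_{n-2} w_{n-3} w_{n-2}. -/
/-- First of the last two letters of `fw (n+2)`. -/
def cc (n : ℕ) : ℕ := if n % 2 = 0 then 0 else 1

/-- Second of the last two letters of `fw (n+2)`. -/
def dd (n : ℕ) : ℕ := if n % 2 = 0 then 1 else 0

/-- `fw (n+2)` with the last two letters removed. -/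
def PP (n : ℕ) : List ℕ := (fw (n+2)).dropLast.dropLast

lemma cc_succ (n : ℕ) : cc (n+1) = dd n := by
  rcases Nat.mod_two_eq_zero_or_one n with h | h <;> simp [cc, dd, h, Nat.add_mod]

lemma dd_succ (n : ℕ) : dd (n+1) = cc n := by
  rcases Nat.mod_two_eq_zero_or_one n with h | h <;> simp [cc, dd, h, Nat.add_mod]

lemma key : ∀ n : ℕ, fw (n+2) = PP n ++ [cc n, dd n] ∧
    fw n ++ fw (n+1) = PP n ++ [dd n, cc n] := by
  intro n
  induction n with
  | zero => constructor <;> decide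
  | succ n ih =>
    obtain ⟨h1, h2⟩ := ih
    have hfw3 : fw (n+3) = (fw (n+1) ++ PP n) ++ [dd n, cc n] := by
      have e : fw (n+3) = fw (n+1) ++ (fw n ++ fw (n+1)) := by
        show fw (n+2) ++ fw (n+1) = _
        rw [show fw (n+2) = fw (n+1) ++ fw n from rfl, List.append_assoc]
      rw [e, h2, List.append_assoc]
    have hPP : PP (n+1) = fw (n+1) ++ PP n := by
      unfold PP
      rw [show fw (n+1+2) = fw (n+3) from rfl, hfw3]
      simp
      rfl
    constructor
    · rw [hPP, cc_succ, dd_succ, List.append_assoc]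
      rw [hfw3, List.append_assoc]
    · rw [hPP, cc_succ, dd_succ]
      rw [show fw (n+2) = PP n ++ [cc n, dd n] from h1]
      simp [List.append_assoc]

lemma PP_succ (n : ℕ) : PP (n+1) = fw (n+1) ++ PP n := by
  have h1 := (key (n+1)).1
  have h2 := (key n).2
  have e : fw (n+3) = fw (n+1) ++ (fw n ++ fw (n+1)) := by
    show fw (n+2) ++ fw (n+1) = _
    rw [show fw (n+2) = fw (n+1) ++ fw n from rfl, List.append_assoc]
  rw [h2] at e
  rw [show fw (n+1+2) = fw (n+3) from rfl, e, cc_succ, dd_succ] at h1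
  have := h1.symm
  rw [← List.append_assoc] at this
  exact List.append_cancel_right this

lemma sw_eq (n : ℕ) : sw (n+3) = cc n :: (PP n ++ [cc n]) := by
  have h1 := (key n).1
  show penult (fw (n+2)) :: (fw (n+2)).dropLast = _
  rw [h1]
  unfold penult
  simp

/-- for all `n ≥ 1`, `w_n = w_{n-2} w_{n-3} w_{n-2}`. -/
theorem singular_word_recursion : ∀ n : ℕ, sw (n + 3) = sw (n + 1) ++ sw n ++ sw (n + 1) := by
  intro n
  match n with
  | 0 => decide
  | 1 => decide
  | 2 => decide
  | m + 3 =>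
    have e1 : sw (m + 3 + 3) = sw (m+6) := rfl
    rw [e1, show m+6 = m+3+3 from rfl, sw_eq (m+3), sw_eq (m+1), sw_eq m]
    rw [show PP (m+3) = fw (m+3) ++ PP (m+2) from PP_succ (m+2),
      show PP (m+2) = fw (m+2) ++ PP (m+1) from PP_succ (m+1)]
    rw [show cc (m+3) = cc (m+1) from by rw [cc_succ, dd_succ],
      show cc m = dd (m+1) from (dd_succ m).symm]
    rw [show fw (m+3) = PP (m+1) ++ [cc (m+1), dd (m+1)] from (key (m+1)).1,
      show fw (m+2) = PP m ++ [dd (m+1), cc (m+1)] from by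
        rw [show dd (m+1) = cc m from dd_succ m, show cc (m+1) = dd m from cc_succ m]
        exact (key m).1]
    simp [List.append_assoc]
end

section
/- For all n ≥ -2, the singular word w_n of the Fibonacci word is a palindrome. -/
/-- The last two letters of `fw (n+2)`. -/
def tl (n : ℕ) : List ℕ := if n % 2 = 0 then [0, 1] else [1, 0]

/-- `fw (n+2)` with the last two letters removed. -/
def Q : ℕ → List ℕ
  | 0 => []
  | 1 => [0]
  | n+2 => Q (n+1) ++ tl (n+1) ++ Q n

lemma tl_succ_succ (n : ℕ) : tl (n+2) = tl n := by
  unfold tl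
  rcases Nat.mod_two_eq_zero_or_one n with h | h <;> simp [Nat.add_mod, h]

lemma tl_rev (n : ℕ) : (tl (n+1)).reverse = tl n := by
  unfold tl
  rcases Nat.mod_two_eq_zero_or_one n with h | h <;> simp [Nat.add_mod, h]

lemma fw_eq (n : ℕ) : fw (n+2) = Q n ++ tl n := by
  induction n using Nat.strong_induction_on with
  | _ n ih =>
    match n with
    | 0 => rfl
    | 1 => rfl
    | n+2 =>
      show fw (n+3) ++ fw (n+2) = _
      rw [ih (n+1) (by omega), ih n (by omega)]
      simp [Q, tl_succ_succ, List.append_assoc]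

lemma Q_comm (n : ℕ) : Q n ++ tl n ++ Q (n+1) = Q (n+1) ++ tl (n+1) ++ Q n := by
  induction n with
  | zero => rfl
  | succ n ih =>
    show Q (n+1) ++ tl (n+1) ++ (Q (n+1) ++ tl (n+1) ++ Q n) = _
    calc Q (n+1) ++ tl (n+1) ++ (Q (n+1) ++ tl (n+1) ++ Q n)
        = Q (n+1) ++ tl (n+1) ++ (Q n ++ tl n ++ Q (n+1)) := by rw [ih]
      _ = Q (n+1) ++ tl (n+1) ++ Q n ++ tl n ++ Q (n+1) := by
          simp [List.append_assoc]
      _ = Q (n+2) ++ tl (n+2) ++ Q (n+1) := by rw [tl_succ_succ]; rfl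

lemma Q_pal (n : ℕ) : (Q n).reverse = Q n := by
  induction n using Nat.strong_induction_on with
  | _ n ih =>
    match n with
    | 0 => rfl
    | 1 => rfl
    | n+2 =>
      show (Q (n+1) ++ tl (n+1) ++ Q n).reverse = _
      rw [List.reverse_append, List.reverse_append, tl_rev, ih (n+1) (by omega),
        ih n (by omega)]
      rw [← List.append_assoc, Q_comm]
      simp [Q, List.append_assoc]

lemma helper (l : List ℕ) (hl : l.reverse = l) (a b : ℕ) :
    (penult (l ++ [a, b]) :: (l ++ [a, b]).dropLast).reverse
      = penult (l ++ [a, b]) :: (l ++ [a, b]).dropLast := by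
  have h1 : l ++ [a, b] = (l ++ [a]) ++ [b] := by simp
  have h2 : (l ++ [a, b]).dropLast = l ++ [a] := by rw [h1, List.dropLast_concat]
  have h3 : penult (l ++ [a, b]) = a := by
    simp [penult, h2]
  rw [h2, h3]
  simp [hl]

/-- for all `n ≥ -2`, the singular word `w_n` is a palindrome. -/
theorem singular_words_palindrome : ∀ n : ℕ, (sw n).reverse = sw n := by
  intro n
  match n with
  | 0 => rfl
  | 1 => rfl
  | 2 => rfl
  | n+3 =>
    have hs : sw (n+3) = penult (fw (n+2)) :: (fw (n+2)).dropLast := rfl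
    rw [hs, fw_eq]
    rcases Nat.mod_two_eq_zero_or_one n with h | h
    · rw [show tl n = [0, 1] from by simp [tl, h]]
      exact helper _ (Q_pal n) _ _
    · rw [show tl n = [1, 0] from by simp [tl, h]]
      exact helper _ (Q_pal n) _ _
end

section
/- For all n ≥ -1, the singular word w_n is not a factor of the concatenation w_{-1} w_0 w_1 ⋯ w_{n-1}. -/
lemma fw_succ (n : ℕ) : fw (n+2) = fw (n+1) ++ fw n := rfl

lemma fw_len_pos : ∀ n, 1 ≤ (fw n).length
  | 0 => by simp [fw]
  | 1 => by simp [fw]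
  | n+2 => by
    rw [fw_succ, List.length_append]
    have := fw_len_pos (n+1); omega

lemma fw_comm : ∀ n, ((fw (n+1)) ++ fw n).take ((fw n).length + (fw (n+1)).length - 2)
    = ((fw n) ++ fw (n+1)).take ((fw n).length + (fw (n+1)).length - 2)
  | 0 => by simp [fw]
  | n+1 => by
    have h1 := fw_len_pos n
    have h2 := fw_len_pos (n+1)
    have hl : (fw (n+1)).length + (fw (n+2)).length - 2
        = (fw (n+1)).length + ((fw n).length + (fw (n+1)).length - 2) := by
      rw [fw_succ, List.length_append]; omega
    have e1 : fw (n+2) ++ fw (n+1) = fw (n+1) ++ (fw n ++ fw (n+1)) := by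
      rw [fw_succ, List.append_assoc]
    have e2 : fw (n+1) ++ fw (n+2) = fw (n+1) ++ (fw (n+1) ++ fw n) := by
      rw [fw_succ]
    rw [e1, e2, hl, List.take_length_add_append, List.take_length_add_append, fw_comm n]

lemma window_count (n i : ℕ) (h : i + (fw (n+2)).length ≤ (fw (n+3)).length) :
    (((fw (n+3)).drop i).take (fw (n+2)).length).count 1 = (fw (n+2)).count 1 := by
  set L := (fw (n+2)).length with hL
  have h1 := fw_len_pos n
  have h2 := fw_len_pos (n+1)
  have hL2 : 2 ≤ L := by rw [hL, fw_succ, List.length_append]; omega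
  have hK : i + L ≤ L + (fw (n+3)).length - 2 := by omega
  -- take (i+L) of fw (n+3) computed two ways
  have key : (fw (n+3)).take (i + L) = fw (n+2) ++ (fw (n+3)).take i := by
    have c := fw_comm (n+2)
    have e4 : fw (n+4) = fw (n+3) ++ fw (n+2) := rfl
    calc (fw (n+3)).take (i + L)
        = ((fw (n+3) ++ fw (n+2)).take (L + (fw (n+3)).length - 2)).take (i + L) := by
          rw [List.take_take, Nat.min_eq_left hK, List.take_append_of_le_length h]
      _ = ((fw (n+2) ++ fw (n+3)).take (L + (fw (n+3)).length - 2)).take (i + L) := by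
          rw [c]
      _ = (fw (n+2) ++ fw (n+3)).take (i + L) := by
          rw [List.take_take, Nat.min_eq_left hK]
      _ = fw (n+2) ++ (fw (n+3)).take i := by
          rw [Nat.add_comm i L]; exact List.take_length_add_append i
  have split : (fw (n+3)).take (i + L)
      = (fw (n+3)).take i ++ ((fw (n+3)).drop i).take L := List.take_add
  have := congrArg (List.count 1) key
  rw [split, List.count_append, List.count_append] at this
  omega

lemma fw_suffix2 : ∀ n, ∃ u, fw (n+2) = u ++ [n % 2, (n+1) % 2]
  | 0 => ⟨[], by decide⟩
  | 1 => ⟨[0], by decide⟩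
  | n+2 => by
    obtain ⟨u, hu⟩ := fw_suffix2 n
    refine ⟨fw (n+3) ++ u, ?_⟩
    have ha : (n+2) % 2 = n % 2 := Nat.add_mod_right n 2
    have hb : (n+3) % 2 = (n+1) % 2 := Nat.add_mod_right (n+1) 2
    rw [ha, hb, show fw (n+4) = fw (n+3) ++ fw (n+2) from rfl, hu, List.append_assoc]

lemma sw_struct (n : ℕ) : ∃ u, fw (n+2) = u ++ [n % 2, (n+1) % 2] ∧
    (fw (n+2)).dropLast = u ++ [n % 2] ∧ sw (n+3) = n % 2 :: (fw (n+2)).dropLast := by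
  obtain ⟨u, hu⟩ := fw_suffix2 n
  have hdl : (fw (n+2)).dropLast = u ++ [n % 2] := by
    rw [hu, show u ++ [n % 2, (n+1) % 2] = (u ++ [n % 2]) ++ [(n+1) % 2] by
      simp [List.append_assoc], List.dropLast_concat]
  refine ⟨u, hu, hdl, ?_⟩
  show penult (fw (n+2)) :: (fw (n+2)).dropLast = _
  rw [penult, hdl, List.getLastD_concat]

lemma sw_len (n : ℕ) : (sw (n+3)).length = (fw (n+2)).length := by
  obtain ⟨u, hu, hdl, hsw⟩ := sw_struct n
  rw [hsw, List.length_cons, List.length_dropLast]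
  have h2 := fw_len_pos (n+2)
  omega

lemma sw_count (n : ℕ) : (sw (n+3)).count 1 ≠ (fw (n+2)).count 1 := by
  obtain ⟨u, hu, hdl, hsw⟩ := sw_struct n
  rw [hsw, hdl, hu]
  rcases Nat.mod_two_eq_zero_or_one n with h | h
  · have h' : (n+1) % 2 = 1 := by omega
    rw [h, h']
    simp [List.count_cons, List.count_append]
  · have h' : (n+1) % 2 = 0 := by omega
    rw [h, h']
    simp [List.count_cons, List.count_append]

lemma fw_last (n : ℕ) : fw (n+3) = (fw (n+3)).dropLast ++ [n % 2] := by
  obtain ⟨u, hu, hdl, _⟩ := sw_struct (n+1)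
  have hm : (n+1+1) % 2 = n % 2 := by omega
  rw [hm] at hu
  have hdl' : (fw (n+3)).dropLast = u ++ [(n+1) % 2] := hdl
  have hu' : fw (n+3) = u ++ [(n+1) % 2, n % 2] := hu
  rw [hdl', hu', List.append_assoc]
  rfl

lemma dropLast_fw_append (n : ℕ) : (fw (n+4)).dropLast = fw (n+3) ++ (fw (n+2)).dropLast := by
  obtain ⟨u, hu, hdl, _⟩ := sw_struct n
  rw [hdl, show fw (n+4) = fw (n+3) ++ fw (n+2) from rfl, hu,
    show fw (n+3) ++ (u ++ [n % 2, (n+1) % 2])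
      = (fw (n+3) ++ (u ++ [n % 2])) ++ [(n+1) % 2] by
        simp [List.append_assoc], List.dropLast_concat]

lemma presw (n : ℕ) : (fw (n+3)).dropLast ++ sw (n+3) = (fw (n+4)).dropLast := by
  obtain ⟨u, hu, hdl, hsw⟩ := sw_struct n
  rw [hsw, dropLast_fw_append,
    show (fw (n+3)).dropLast ++ (n % 2 :: (fw (n+2)).dropLast)
      = ((fw (n+3)).dropLast ++ [n % 2]) ++ (fw (n+2)).dropLast by simp,
    ← fw_last]

lemma join_snoc (A : List (List ℕ)) (b : List ℕ) : (A ++ [b]).flatten = A.flatten ++ b := by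
  simp

lemma join_eq : ∀ n, ((List.range n).map (fun j => sw (j+1))).flatten = (fw (n+1)).dropLast
  | 0 => by decide
  | 1 => by decide
  | 2 => by decide
  | n+3 => by
    have h := join_eq (n+2)
    rw [List.range_succ, List.map_append, List.map_cons, List.map_nil, join_snoc, h]
    exact presw n

/-- for all `n ≥ -1`, `w_n` is not a factor of `w₋₁ w₀ ⋯ w_{n-1}`. -/
theorem singular_word_not_factor_product :
    ∀ n : ℕ, ¬ (sw (n + 1) <:+: ((List.range n).map (fun j => sw (j + 1))).flatten) := by
  intro n h
  rw [join_eq n] at h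
  match n, h with
  | 0, h => exact absurd h (by decide)
  | 1, h => exact absurd h (by decide)
  | m+2, h =>
    have h2 : sw (m+3) <:+: fw (m+3) := h.trans (List.dropLast_prefix _).isInfix
    obtain ⟨s, t, hst⟩ := h2
    have hlen : s.length + (sw (m+3)).length + t.length = (fw (m+3)).length := by
      have := congrArg List.length hst
      simpa [List.length_append, Nat.add_assoc] using this
    have hsl := sw_len m
    have hdrop : (fw (m+3)).drop s.length = sw (m+3) ++ t := by
      rw [← hst, List.append_assoc, List.drop_left]
    have hwin : ((fw (m+3)).drop s.length).take (fw (m+2)).length = sw (m+3) := by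
      rw [hdrop, ← sw_len m, List.take_left]
    have hc := window_count m s.length (by omega)
    rw [hwin] at hc
    exact sw_count m hc
end

section
/- For every n ≥ 0, the concatenation w_{-1} w_0 ⋯ w_{n-1} of the first singular words is a prefix of the Fibonacci word f_{n+1}; consequently the infinite Fibonacci word is the concatenation of all singular words w_{-1} w_0 w_1 ⋯. -/
/-- The infinite Fibonacci word (the fixed point of `0 ↦ 01, 1 ↦ 0`), as the limit of
the nested words `f_n`: its `i`-th letter is the `i`-th letter of `f_{i+1}`. -/
def fibWord (i : ℕ) : ℕ := (fw (i + 2)).getD i 0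

/-- The concatenation `w₋₁ w₀ ⋯ w_{n-1}` of the first `n + 1` singular words. -/
def Pfib (n : ℕ) : List ℕ := ((List.range (n + 1)).map (fun j => sw (j + 1))).flatten

lemma tail2 : ∀ m, ∃ t, fw (m+2) = t ++ [m % 2, (m+1) % 2]
  | 0 => ⟨[], rfl⟩
  | 1 => ⟨[0], rfl⟩
  | m+2 => by
    obtain ⟨t, ht⟩ := tail2 m
    refine ⟨fw (m+3) ++ t, ?_⟩
    have h4 : fw (m+4) = fw (m+3) ++ fw (m+2) := rfl
    rw [h4, ht]
    have h1 : (m+2) % 2 = m % 2 := by omega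
    have h2 : (m+3) % 2 = (m+1) % 2 := by omega
    rw [h1, h2, List.append_assoc]

lemma penult_fw (m : ℕ) : penult (fw (m+2)) = m % 2 := by
  obtain ⟨t, ht⟩ := tail2 m
  rw [penult, ht]
  have : (t ++ [m % 2, (m+1) % 2]).dropLast = t ++ [m % 2] := by
    rw [show t ++ [m % 2, (m+1) % 2] = (t ++ [m % 2]) ++ [(m+1) % 2] by simp,
      List.dropLast_concat]
  rw [this]; simp

lemma fw_eq_dropLast_concat (m : ℕ) :
    fw (m+2) = (fw (m+2)).dropLast ++ [(m+1) % 2] := by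
  obtain ⟨t, ht⟩ := tail2 m
  rw [ht, show t ++ [m % 2, (m+1) % 2] = (t ++ [m % 2]) ++ [(m+1) % 2] by simp,
    List.dropLast_concat]

lemma Pfib_succ (n : ℕ) : Pfib (n+1) = Pfib n ++ sw (n+2) := by
  simp [Pfib, List.range_succ]

lemma Pfib_eq : ∀ n, Pfib n = (fw (n+2)).dropLast
  | 0 => rfl
  | 1 => rfl
  | n+2 => by
    rw [Pfib_succ, Pfib_eq (n+1)]
    have hsw : sw (n+3) = penult (fw (n+2)) :: (fw (n+2)).dropLast := rfl
    have h4 : fw (n+4) = fw (n+3) ++ fw (n+2) := rfl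
    rw [hsw, h4, List.dropLast_append_of_ne_nil (fw_ne_nil (n+2))]
    have hlast : fw (n+3) = (fw (n+3)).dropLast ++ [penult (fw (n+2))] := by
      rw [penult_fw n]
      have := fw_eq_dropLast_concat (n+1)
      rwa [show (n+2) % 2 = n % 2 by omega] at this
    rw [show (fw (n+3)).dropLast ++ (penult (fw (n+2)) :: (fw (n+2)).dropLast)
        = ((fw (n+3)).dropLast ++ [penult (fw (n+2))]) ++ (fw (n+2)).dropLast by simp,
      ← hlast]

lemma fw_len : ∀ n, n + 1 ≤ (fw (n+2)).length
  | 0 => by simp [fw]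
  | 1 => by simp [fw]
  | n+2 => by
    have h1 : n + 2 ≤ (fw (n+3)).length := fw_len (n+1)
    have h2 : n + 1 ≤ (fw (n+2)).length := fw_len n
    have h4 : fw (n+4) = fw (n+3) ++ fw (n+2) := rfl
    rw [h4, List.length_append]
    omega

lemma fw_prefix_step (m : ℕ) : fw (m+2) <+: fw (m+3) := ⟨fw (m+1), rfl⟩

lemma fw_prefix_le : ∀ {a b : ℕ}, a ≤ b → fw (a+2) <+: fw (b+2) := by
  intro a b h
  induction b with
  | zero => rw [Nat.le_zero.mp h]
  | succ b ih =>
    rcases Nat.lt_or_ge a (b+1) with h' | h'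
    · exact (ih (by omega)).trans (fw_prefix_step b)
    · rw [Nat.le_antisymm h h']

lemma getD_of_prefix {l₁ l₂ : List ℕ} (h : l₁ <+: l₂) {i : ℕ} (hi : i < l₁.length) :
    l₂.getD i 0 = l₁.getD i 0 := by
  obtain ⟨t, rfl⟩ := h
  exact List.getD_append _ _ _ _ hi

lemma fw_getD (m i : ℕ) (hi : i < (fw (m+2)).length) :
    (fw (m+2)).getD i 0 = fibWord i := by
  simp only [fibWord]
  rcases Nat.le_total i m with h | h
  · exact getD_of_prefix (fw_prefix_le h)
      (lt_of_lt_of_le (Nat.lt_succ_self i) (fw_len i))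
  · exact (getD_of_prefix (fw_prefix_le h) hi).symm

/-- for every `n ≥ 0`, `w₋₁ w₀ ⋯ w_{n-1}` is a prefix of `f_{n+1}`;
consequently the infinite Fibonacci word is the concatenation `w₋₁ w₀ w₁ ⋯` of all
singular words. -/
theorem singular_product_prefix :
    (∀ n : ℕ, Pfib n <+: fw (n + 2)) ∧
      (∀ n : ℕ, ∀ i < (Pfib n).length, (Pfib n).getD i 0 = fibWord i) ∧
      (∀ N : ℕ, ∃ n : ℕ, N ≤ (Pfib n).length) := by
  refine ⟨fun n => ?_, fun n i hi => ?_, fun N => ⟨N, ?_⟩⟩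
  · rw [Pfib_eq]; exact List.dropLast_prefix _
  · have hpre : Pfib n <+: fw (n+2) := by
      rw [Pfib_eq]; exact List.dropLast_prefix _
    have hi' : i < (fw (n+2)).length := lt_of_lt_of_le hi hpre.length_le
    rw [(getD_of_prefix hpre hi).symm, fw_getD n i hi']
  · have h1 := fw_len N
    have h2 : (Pfib N).length = (fw (N+2)).length - 1 := by
      rw [Pfib_eq, List.length_dropLast]
    omega
end

section
/- Let m ≥ 2 and n ≥ 1. The reversal of the finite m-bonacci word h_n starts with the two letters (n mod m)·0 if m does not divide n, and starts with 01 if m divides n. -/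
/-- The `m`-bonacci morphism on letters: `i ↦ 0(i+1)` for `i ≤ m-2`, `(m-1) ↦ 0`. -/
def phi (m a : ℕ) : List ℕ := if a = m - 1 then [0] else [0, a + 1]

/-- The `m`-bonacci morphism on words. -/
def phiW (m : ℕ) (w : List ℕ) : List ℕ := w.flatMap (phi m)

/-- The finite `m`-bonacci words `h_n = φ_m^n(0)`. -/
def hb (m : ℕ) : ℕ → List ℕ
  | 0 => [0]
  | n+1 => phiW m (hb m n)

/-- The palindromic prefixes of the `m`-bonacci word, shifted:
`ub m n` is the paper's `u_{n+1}` (so `ub m 0 = u₁ = ε`, and `u_{n+2} = h_n u_{n+1}`). -/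
def ub (m : ℕ) : ℕ → List ℕ
  | 0 => []
  | n+1 => hb m n ++ ub m n

/-!
The last two letters of `h_n` depend only on `r = n mod m`: they are `10` if `r = 0` and `0r`
otherwise. Since `φ_m(0) = 01`, the image of `0r` ends in `01·φ_m(r)`, which ends in `0(r+1)`,
or in `10` when `r = m-1`; the image of `10` ends in `φ_m(0) = 01`. Induction on `n` from
`h_1 = 01` then gives the suffix of `h_n`, and reversing it gives the statement.
-/

def lastTwo (r : ℕ) : List ℕ := if r = 0 then [1, 0] else [0, r]

lemma lastTwo_zero : lastTwo 0 = [1, 0] := rfl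

lemma lastTwo_of_ne_zero {r : ℕ} (hr : r ≠ 0) : lastTwo r = [0, r] := if_neg hr

lemma phiW_pair (m a b : ℕ) : phiW m [a, b] = phi m a ++ phi m b := by
  simp [phiW]

lemma phi_zero {m : ℕ} (hm : 2 ≤ m) : phi m 0 = [0, 1] := by
  simp [phi]
  omega

lemma phi_sub_one (m : ℕ) : phi m (m - 1) = [0] := if_pos rfl

lemma phi_of_ne {m a : ℕ} (ha : a ≠ m - 1) : phi m a = [0, a + 1] := if_neg ha

lemma lastTwo_succ_isSuffix_phiW {m r : ℕ} (hm : 2 ≤ m) (hr : r < m) :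
    lastTwo ((r + 1) % m) <:+ phiW m (lastTwo r) := by
  rcases Nat.eq_zero_or_pos r with rfl | hr0
  · rw [Nat.one_mod_eq_one.mpr (by omega), lastTwo_zero, lastTwo_of_ne_zero one_ne_zero,
      phiW_pair, phi_zero hm]
    exact List.suffix_append _ _
  · rw [lastTwo_of_ne_zero hr0.ne', phiW_pair, phi_zero hm]
    rcases eq_or_ne r (m - 1) with rfl | hne
    · rw [Nat.sub_add_cancel (by omega), Nat.mod_self, lastTwo_zero, phi_sub_one]
      exact ⟨[0], rfl⟩
    · rw [Nat.mod_eq_of_lt (by omega), lastTwo_of_ne_zero r.succ_ne_zero, phi_of_ne hne]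
      exact ⟨[0, 1], rfl⟩

lemma lastTwo_isSuffix_hb {m n : ℕ} (hm : 2 ≤ m) (hn : 1 ≤ n) : lastTwo (n % m) <:+ hb m n := by
  induction n, hn using Nat.le_induction with
  | base =>
    rw [Nat.one_mod_eq_one.mpr (by omega), lastTwo_of_ne_zero one_ne_zero, hb, hb, phiW,
      List.flatMap_singleton, phi_zero hm]
  | succ n _ ih =>
    rw [Nat.add_mod, Nat.one_mod_eq_one.mpr (by omega)]
    exact (lastTwo_succ_isSuffix_phiW hm (Nat.mod_lt n (by omega))).trans
      (ih.flatMap (phi m))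

/-- for `m ≥ 2` and `n ≥ 1`, `h_n^R` starts with `(n mod m)·0`
if `m ∤ n`, and with `01` if `m ∣ n`. -/
theorem hb_reverse_start :
    ∀ m n : ℕ, 2 ≤ m → 1 ≤ n →
      (m ∣ n → [0, 1] <+: (hb m n).reverse) ∧
      (¬ m ∣ n → [n % m, 0] <+: (hb m n).reverse) := by
  intro m n hm hn
  have hsuffix := List.reverse_prefix.mpr (lastTwo_isSuffix_hb hm hn)
  constructor
  · intro hdvd
    simpa [Nat.mod_eq_zero_of_dvd hdvd, lastTwo_zero] using hsuffix
  · intro hndvd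
    simpa [lastTwo_of_ne_zero (Nat.dvd_iff_mod_eq_zero.not.mp hndvd)] using hsuffix
end

section
/- Let m ≥ 2. For every n ≥ 1, the reversal of h_n equals 0^{-1} φ_m(h_{n-1}^R) 0; that is, φ_m(h_{n-1}^R)·0 = 0·h_n^R. -/
theorem List.flatMap_reverse_append_singleton {α β : Type*} {f : α → List β} {c : β}
    (hf : ∀ a, f a ++ [c] = c :: (f a).reverse) (w : List α) :
    w.reverse.flatMap f ++ [c] = c :: (w.flatMap f).reverse := by
  induction w with
  | nil => rfl
  | cons a t ih =>
    calc (a :: t).reverse.flatMap f ++ [c]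
        = (t.reverse.flatMap f ++ [c]) ++ (f a).reverse := by simp [hf]
      _ = c :: (f a ++ t.flatMap f).reverse := by simp [ih]

lemma phi_append_zero (m a : ℕ) : phi m a ++ [0] = 0 :: (phi m a).reverse := by
  unfold phi; split <;> rfl

lemma phiW_reverse_append_zero (m : ℕ) (w : List ℕ) :
    phiW m w.reverse ++ [0] = 0 :: (phiW m w).reverse :=
  List.flatMap_reverse_append_singleton (phi_append_zero m) w

/-- for `m ≥ 2` and `n ≥ 1`, `h_n^R = 0⁻¹ φ_m(h_{n-1}^R) 0`, i.e.
`φ_m(h_{n-1}^R)·0 = 0·h_n^R`. -/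
theorem hb_reverse_phi :
    ∀ m n : ℕ, 2 ≤ m →
      phiW m ((hb m n).reverse) ++ [0] = 0 :: (hb m (n + 1)).reverse :=
  fun m n _ => phiW_reverse_append_zero m (hb m n)
end

section
/- Let m ≥ 2 and let u_n denote the sequence of palindromic prefixes of the infinite m-bonacci word, with u_1 = ε, ordered by increasing length. Then for all n ≥ 2, u_n = φ_m(u_{n-1})·0. -/
/-! Since `φ_m` is a morphism and `φ_m(h_k) = h_{k+1}`, induction on `u_{k+2} = h_k u_{k+1}` gives
`φ_m(u_{k+1}) 0 = h_k φ_m(u_k) 0 = h_k u_{k+1} = u_{k+2}`; the base case is `φ_m(ε) 0 = 0 = h_0 ε`. -/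

theorem phiW_append (m : ℕ) (a b : List ℕ) : phiW m (a ++ b) = phiW m a ++ phiW m b :=
  List.flatMap_append

theorem ub_succ (m k : ℕ) : ub m (k + 1) = phiW m (ub m k) ++ [0] := by
  induction k with
  | zero => rfl
  | succ k ih =>
    calc ub m (k + 2) = phiW m (hb m k) ++ ub m (k + 1) := rfl
      _ = phiW m (hb m k ++ ub m k) ++ [0] := by rw [ih, phiW_append, List.append_assoc]
      _ = phiW m (ub m (k + 1)) ++ [0] := rfl

/-- for `m ≥ 2` and `n ≥ 2`, the palindromic prefixes of the `m`-bonacci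
word satisfy `u_n = φ_m(u_{n-1})·0` (here `ub m k` is the paper's `u_{k+1}`). -/
theorem ub_phi :
    ∀ m : ℕ, 2 ≤ m → ∀ n : ℕ, 2 ≤ n →
      ub m (n - 1) = phiW m (ub m (n - 2)) ++ [0] := by
  intro m _ n hn
  obtain ⟨k, rfl⟩ : ∃ k, n = k + 2 := ⟨n - 2, by omega⟩
  exact ub_succ m k
end

section
/- Let m ≥ 2 and let φ_m be the m-bonacci morphism. For finite words x, y over A_m: if φ_m(x)·0 is a factor of φ_m(y)·0, then x is a factor of y. -/
lemma phiW_cons (m a : ℕ) (z : List ℕ) :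
    phiW m (a :: z) = phi m a ++ phiW m z := rfl

lemma head_zero (m : ℕ) (z : List ℕ) : ∃ t, phiW m z ++ [0] = 0 :: t := by
  cases z with
  | nil => exact ⟨[], rfl⟩
  | cons a z' =>
    rw [phiW_cons, phi]
    split
    · exact ⟨_, rfl⟩
    · exact ⟨_, rfl⟩

lemma prefix_lemma (m : ℕ) : ∀ x y : List ℕ,
    (phiW m x ++ [0]) <+: (phiW m y ++ [0]) → x <+: y := by
  intro x
  induction x with
  | nil => intro y _; exact List.nil_prefix
  | cons a x' ih =>
    intro y h
    cases y with
    | nil =>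
      exfalso
      have hl := h.length_le
      rw [phiW_cons] at hl
      simp only [List.length_append, List.length_singleton, phiW, List.flatMap_nil,
        List.length_nil] at hl
      have : 1 ≤ (phi m a).length := by unfold phi; split <;> simp
      omega
    | cons b y' =>
      rw [phiW_cons, phiW_cons, List.append_assoc, List.append_assoc] at h
      unfold phi at h
      obtain ⟨tx, hx⟩ := head_zero m x'
      obtain ⟨ty, hy⟩ := head_zero m y'
      by_cases ha : a = m - 1 <;> by_cases hb : b = m - 1 <;>
        simp only [ha, hb, if_pos, if_neg, if_true, ite_true, ite_false, if_false] at h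
      · -- both [0]
        simp only [List.singleton_append, List.cons_prefix_cons] at h
        subst hb; rw [ha]
        exact List.cons_prefix_cons.mpr ⟨rfl, ih y' h.2⟩
      · -- a = m-1, b ≠ m-1 : contradiction
        exfalso
        simp only [List.singleton_append, List.cons_append, List.nil_append,
          List.cons_prefix_cons, hx] at h
        omega
      · exfalso
        simp only [List.singleton_append, List.cons_append, List.nil_append,
          List.cons_prefix_cons, hy] at h
        omega
      · simp only [List.cons_append, List.nil_append, List.cons_prefix_cons] at h
        have hab : a = b := by omega
        rw [hab]
        exact List.cons_prefix_cons.mpr ⟨rfl, ih y' h.2.2⟩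

lemma align (m : ℕ) (x : List ℕ) : ∀ y : List ℕ,
    (phiW m x ++ [0]) <:+: (phiW m y ++ [0]) →
    ∃ y2, y2 <:+ y ∧ (phiW m x ++ [0]) <+: (phiW m y2 ++ [0]) := by
  intro y
  induction y with
  | nil =>
    intro h
    refine ⟨[], List.suffix_refl _, ?_⟩
    obtain ⟨s, t, hst⟩ := h
    obtain ⟨tx, hx⟩ := head_zero m x
    cases s with
    | nil => exact ⟨t, hst⟩
    | cons c s' =>
      exfalso
      have hl := congrArg List.length hst
      simp only [phiW, List.flatMap_nil, List.nil_append, List.length_append,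
        List.length_cons, List.length_singleton, hx] at hl
      omega
  | cons b y' ih =>
    intro h
    obtain ⟨s, t, hst⟩ := h
    cases s with
    | nil =>
      exact ⟨b :: y', List.suffix_refl _, ⟨t, hst⟩⟩
    | cons c s' =>
      rw [phiW_cons, List.append_assoc] at hst
      obtain ⟨tx, hx⟩ := head_zero m x
      unfold phi at hst
      by_cases hb : b = m - 1 <;> simp only [hb, ite_true, ite_false, if_pos, if_neg,
        List.singleton_append, List.cons_append, List.nil_append, List.cons.injEq] at hst
      · obtain ⟨y2, h1, h2⟩ := ih ⟨s', t, by rw [List.append_assoc]; exact hst.2⟩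
        exact ⟨y2, h1.trans (List.suffix_cons _ _), h2⟩
      · cases s' with
        | nil =>
          exfalso
          have h2 := hst.2
          rw [List.nil_append, hx] at h2
          simp only [List.cons_append, List.cons.injEq] at h2
          omega
        | cons d s'' =>
          simp only [List.cons_append, List.cons.injEq] at hst
          obtain ⟨y2, h1, h2⟩ := ih ⟨s'', t, by rw [List.append_assoc]; exact hst.2.2⟩
          exact ⟨y2, h1.trans (List.suffix_cons _ _), h2⟩

/-- for words `x, y` over `A_m`, if `φ_m(x)·0` is a factor of
`φ_m(y)·0`, then `x` is a factor of `y`. -/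
theorem phi_factor_zero :
    ∀ m : ℕ, 2 ≤ m → ∀ x y : List ℕ,
      (∀ a ∈ x, a < m) → (∀ a ∈ y, a < m) →
      (phiW m x ++ [0]) <:+: (phiW m y ++ [0]) → x <:+: y := by
  intro m _ x y _ _ h
  obtain ⟨y2, hy2, hpre⟩ := align m x y h
  exact ((prefix_lemma m x y2 hpre).isInfix).trans hy2.isInfix
end

section
/- Let w be a prefix of the infinite m-bonacci word h_ω with |u_n| < |w| ≤ |u_n| + |t_n| for the unique such n ≥ 2 (a prefix of type-2). Then w is open, i.e., w is not closed. -/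
/-- The word `t_n` (for `n ≥ 2`), defined by `h_{n-1}^R = t_n h_{n-2}^R`, so that
`u_{n+1} = u_n t_n h_{n-2}^R`; explicitly `t_n = (n-1) h₀^R ⋯ h_{n-3}^R` for
`2 ≤ n ≤ m-1` and `t_n = h_{n-m-1}^R h_{n-m}^R ⋯ h_{n-3}^R` for `n ≥ m`. -/
def tb (m n : ℕ) : List ℕ :=
  ((hb m (n - 1)).reverse).take ((hb m (n - 1)).length - (hb m (n - 2)).length)

namespace MB

lemma phiW_nil (m : ℕ) : phiW m [] = [] := rfl
lemma phiW_cons (m a : ℕ) (w : List ℕ) : phiW m (a :: w) = phi m a ++ phiW m w := rfl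
lemma phiW_append (m : ℕ) (a b : List ℕ) : phiW m (a ++ b) = phiW m a ++ phiW m b := by
  simp [phiW, List.flatMap_append]

lemma phi_length_pos (m a : ℕ) : 0 < (phi m a).length := by
  unfold phi; split <;> simp

lemma phi_length_le (m a : ℕ) : (phi m a).length ≤ 2 := by
  unfold phi; split <;> simp

lemma phi_head (m a : ℕ) : ∃ t, phi m a = 0 :: t := by
  unfold phi; split
  · exact ⟨[], rfl⟩
  · exact ⟨[a+1], rfl⟩

lemma phiW_head (m : ℕ) (w : List ℕ) (hw : w ≠ []) : ∃ t, phiW m w = 0 :: t := by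
  cases w with
  | nil => simp at hw
  | cons a w =>
    obtain ⟨t, ht⟩ := phi_head m a
    exact ⟨t ++ phiW m w, by simp [phiW_cons, ht]⟩

lemma length_phiW_ge (m : ℕ) (w : List ℕ) : w.length ≤ (phiW m w).length := by
  induction w with
  | nil => simp [phiW]
  | cons a w ih =>
    rw [phiW_cons]
    simp only [List.length_append, List.length_cons]
    have := phi_length_pos m a
    omega

lemma count0_phi (m a : ℕ) : (phi m a).count 0 = 1 := by
  unfold phi; split <;> simp

lemma count0_phiW (m : ℕ) (w : List ℕ) : (phiW m w).count 0 = w.length := by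
  induction w with
  | nil => simp [phiW]
  | cons a w ih =>
    rw [phiW_cons]
    simp [List.count_append, ih, count0_phi]
    omega

lemma length_phiW_ge_add (m : ℕ) (hm : 2 ≤ m) (w : List ℕ) :
    w.length + w.count 0 ≤ (phiW m w).length := by
  induction w with
  | nil => simp [phiW]
  | cons a w ih =>
    rw [phiW_cons]
    simp only [List.length_append, List.length_cons, List.count_cons]
    have h1 : 0 < (phi m a).length := phi_length_pos m a
    have h2 : a = 0 → (phi m a).length = 2 := by
      intro ha; unfold phi; rw [ha]; rw [if_neg (by omega)]; rfl
    by_cases ha : a = 0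
    · have h3 := h2 ha; subst ha; simp; omega
    · simp [ha]; omega

lemma hb_ne_nil (m n : ℕ) : hb m n ≠ [] := by
  induction n with
  | zero => simp [hb]
  | succ n ih =>
    show phiW m (hb m n) ≠ []
    obtain ⟨t, ht⟩ := phiW_head m (hb m n) ih
    simp [ht]

lemma hb_head (m n : ℕ) : ∃ t, hb m n = 0 :: t := by
  cases n with
  | zero => exact ⟨[], rfl⟩
  | succ n => exact phiW_head m (hb m n) (hb_ne_nil m n)

lemma prefix_phiW {m : ℕ} {a b : List ℕ} (h : a <+: b) : phiW m a <+: phiW m b := by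
  obtain ⟨t, ht⟩ := h
  exact ⟨phiW m t, by rw [← phiW_append, ht]⟩

lemma hb_prefix_succ (m n : ℕ) : hb m n <+: hb m (n+1) := by
  induction n with
  | zero =>
    show [0] <+: phiW m [0]
    obtain ⟨t, ht⟩ := phiW_head m [0] (by simp)
    exact ⟨t, by simp [ht]⟩
  | succ n ih => exact prefix_phiW ih

lemma hb_prefix (m : ℕ) {a b : ℕ} (h : a ≤ b) : hb m a <+: hb m b := by
  induction b with
  | zero => cases Nat.le_zero.mp h; exact List.prefix_refl _
  | succ b ih =>
    rcases Nat.lt_or_ge a (b+1) with h' | h'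
    · exact (ih (by omega)).trans (hb_prefix_succ m b)
    · have : a = b + 1 := by omega
      subst this; exact List.prefix_refl _

lemma ub_succ (m n : ℕ) : ub m (n+1) = phiW m (ub m n) ++ [0] := by
  induction n with
  | zero => show hb m 0 ++ [] = phiW m [] ++ [0]; rfl
  | succ n ih =>
    show hb m (n+1) ++ ub m (n+1) = phiW m (hb m n ++ ub m n) ++ [0]
    rw [phiW_append, ih]
    simp [hb]

def Pb (m n : ℕ) : List ℕ := ub m n ++ [n % m]

lemma Pb_length (m n : ℕ) : (Pb m n).length = (ub m n).length + 1 := by simp [Pb]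

lemma phi_mod (m n : ℕ) (hm : 2 ≤ m) :
    phi m (n % m) = if n % m = m - 1 then [0] else [0, (n+1) % m] := by
  unfold phi
  split
  · rfl
  · rename_i h
    have h1 : n % m < m := Nat.mod_lt _ (by omega)
    have h2 : (n+1) % m = n % m + 1 := by
      have : n % m + 1 < m := by omega
      have e1 : (1:ℕ) % m = 1 := Nat.mod_eq_of_lt (by omega)
      rw [Nat.add_mod, e1, Nat.mod_eq_of_lt this]
    rw [h2]

lemma Pb_phi (m n : ℕ) (hm : 2 ≤ m) :
    Pb m (n+1) = phiW m (Pb m n) ++ (if n % m = m - 1 then [0] else []) := by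
  unfold Pb
  rw [ub_succ, phiW_append]
  show phiW m (ub m n) ++ [0] ++ [(n+1) % m] = phiW m (ub m n) ++ phiW m [n % m] ++ _
  have : phiW m [n % m] = phi m (n % m) := by simp [phiW]
  rw [this, phi_mod m n hm]
  by_cases h : n % m = m - 1
  · have h2 : (n+1) % m = 0 := by
      have e1 : (1:ℕ) % m = 1 := Nat.mod_eq_of_lt (by omega)
      have e2 : m - 1 + 1 = m := by omega
      rw [Nat.add_mod, e1, h, e2, Nat.mod_self]
    simp [h, h2]
  · simp [h]

end MB

namespace MB

lemma ub_length (m n : ℕ) : (ub m (n+1)).length = (hb m n).length + (ub m n).length := by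
  simp [ub]

lemma lenub2 (m : ℕ) (hm : 2 ≤ m) : ∀ n, (ub m n).length + 2 ≤ (hb m (n+1)).length := by
  intro n
  induction n with
  | zero =>
    show 0 + 2 ≤ (phiW m [0]).length
    have : phiW m [0] = phi m 0 := by simp [phiW]
    rw [this]
    unfold phi
    rw [if_neg (by omega)]
    simp
  | succ n ih =>
    rw [ub_length]
    have h1 : (hb m (n+1)).length + (hb m n).length ≤ (hb m (n+1+1)).length := by
      have h2 : (hb m (n+1+1)).length = (phiW m (hb m (n+1))).length := rfl
      have h3 := length_phiW_ge_add m hm (hb m (n+1))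
      have h4 : (hb m (n+1)).count 0 = (hb m n).length := count0_phiW m (hb m n)
      omega
    omega

lemma Pb_prefix (m : ℕ) (hm : 2 ≤ m) (n : ℕ) : Pb m n <+: hb m (n+1) := by
  induction n with
  | zero =>
    have h0 : Pb m 0 = [0] := by simp [Pb, ub]
    have h1 : hb m 1 = [0, 1] := by
      show phiW m [0] = [0, 1]
      have h2 : phiW m [0] = phi m 0 := by simp [phiW]
      rw [h2]
      unfold phi
      rw [if_neg (show ¬ (0 = m - 1) by omega)]
    rw [h0, h1]
    exact ⟨[1], rfl⟩
  | succ n ih =>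
    rw [Pb_phi m n hm]
    obtain ⟨t, ht⟩ := ih
    have hlt : (Pb m n).length < (hb m (n+1)).length := by
      have := lenub2 m hm n
      rw [Pb_length]
      omega
    have hlen2 : (Pb m n).length + t.length = (hb m (n+1)).length := by
      rw [← ht]; simp
    have htne : t ≠ [] := by
      intro h
      rw [h] at hlen2
      simp at hlen2
      omega
    have hsplit : hb m (n+1+1) = phiW m (Pb m n) ++ phiW m t := by
      show phiW m (hb m (n+1)) = _
      rw [← ht, phiW_append]
    obtain ⟨t', ht'⟩ := phiW_head m t htne
    by_cases h : n % m = m - 1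
    · rw [if_pos h, hsplit, ht']
      exact ⟨t', by simp⟩
    · rw [if_neg h, hsplit]
      simp

lemma lenhb_le (m : ℕ) (hm : 2 ≤ m) : ∀ n, (hb m n).length ≤ (ub m n).length + 1 := by
  intro n
  induction n with
  | zero => simp [hb, ub]
  | succ n ih =>
    have hpre : hb m n <+: Pb m n :=
      List.prefix_of_prefix_length_le (hb_prefix_succ m n) (Pb_prefix m hm n)
        (by rw [Pb_length]; omega)
    have h1 : (hb m (n+1)).length ≤ (phiW m (Pb m n)).length :=
      (prefix_phiW hpre).length_le
    have h2 : (phiW m (Pb m n)).length = (phiW m (ub m n)).length + (phi m (n % m)).length := by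
      show (phiW m (ub m n ++ [n % m])).length = _
      rw [phiW_append]
      simp [phiW]
    have h3 : (phi m (n % m)).length ≤ 2 := phi_length_le m _
    have h4 : (ub m (n+1)).length = (phiW m (ub m n)).length + 1 := by
      rw [ub_succ]; simp
    omega

lemma hb_prefix_Pb (m : ℕ) (hm : 2 ≤ m) (n : ℕ) : hb m n <+: Pb m n :=
  List.prefix_of_prefix_length_le (hb_prefix_succ m n) (Pb_prefix m hm n)
    (by rw [Pb_length]; have := lenhb_le m hm n; omega)

/-- Starting position of the `j`-th block in `phiW m w`. -/
def pos (m : ℕ) (w : List ℕ) (j : ℕ) : ℕ := (phiW m (w.take j)).length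

lemma pos_zero (m : ℕ) (w : List ℕ) : pos m w 0 = 0 := rfl

lemma pos_top (m : ℕ) (w : List ℕ) : pos m w w.length = (phiW m w).length := by
  unfold pos; rw [List.take_length]

lemma decomp (m : ℕ) (w : List ℕ) (j : ℕ) (hj : j < w.length) :
    w = w.take j ++ w.getD j 0 :: w.drop (j+1) := by
  conv_lhs => rw [← List.take_append_drop j w]
  congr 1
  rw [List.drop_eq_getElem_cons hj, List.getD_eq_getElem w 0 hj]

lemma pos_succ (m : ℕ) (w : List ℕ) (j : ℕ) (hj : j < w.length) :
    pos m w (j+1) = pos m w j + (phi m (w.getD j 0)).length := by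
  unfold pos
  have h1 : w.take (j+1) = w.take j ++ [w.getD j 0] := by
    rw [List.take_succ, List.getElem?_eq_getElem hj, List.getD_eq_getElem w 0 hj]
    rfl
  rw [h1, phiW_append]
  simp [phiW]

lemma pos_mono (m : ℕ) (w : List ℕ) {j j' : ℕ} (h : j ≤ j') : pos m w j ≤ pos m w j' := by
  unfold pos
  have : w.take j <+: w.take j' := by
    have h2 := List.take_prefix j (w.take j')
    rwa [List.take_take, min_eq_left h] at h2
  exact (prefix_phiW this).length_le

lemma pos_strict (m : ℕ) (w : List ℕ) {j j' : ℕ} (hj : j < w.length) (h : j < j') :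
    pos m w j < pos m w j' := by
  have h1 := pos_succ m w j hj
  have h2 := phi_length_pos m (w.getD j 0)
  have h3 := pos_mono m w (show j + 1 ≤ j' by omega)
  omega

lemma pos_le_phiW (m : ℕ) (w : List ℕ) (j : ℕ) : pos m w j ≤ (phiW m w).length :=
  (prefix_phiW (List.take_prefix j w)).length_le

end MB

namespace MB

lemma blen_one (m a : ℕ) (h : a = m - 1) : (phi m a).length = 1 := by
  unfold phi; rw [if_pos h]; rfl

lemma blen_two (m a : ℕ) (h : a ≠ m - 1) : (phi m a).length = 2 := by
  unfold phi; rw [if_neg h]; rfl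

lemma v_zero (m : ℕ) (w e : List ℕ) (he : e = [] ∨ e = [0]) (j : ℕ) :
    (phiW m w ++ e).getD (pos m w j) 0 = 0 := by
  by_cases hj : j < w.length
  · have hd : phiW m w = phiW m (w.take j) ++ (phi m (w.getD j 0) ++ phiW m (w.drop (j+1))) := by
      conv_lhs => rw [decomp m w j hj]
      rw [phiW_append, phiW_cons]
    obtain ⟨t, ht⟩ := phi_head m (w.getD j 0)
    have hpos : pos m w j = (phiW m (w.take j)).length := rfl
    rw [hd, List.append_assoc, hpos, List.getD_append_right _ _ _ _ (le_refl _),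
      Nat.sub_self, ht]
    rfl
  · have h1 : w.take j = w := List.take_of_length_le (by omega)
    have h2 : pos m w j = (phiW m w).length := by unfold pos; rw [h1]
    rw [h2, List.getD_append_right _ _ _ _ (le_refl _)]
    rcases he with he | he <;> simp [he]

lemma v_snd (m : ℕ) (w e : List ℕ) (j : ℕ) (hj : j < w.length) (h : w.getD j 0 ≠ m - 1) :
    (phiW m w ++ e).getD (pos m w j + 1) 0 = w.getD j 0 + 1 := by
  have hd : phiW m w = phiW m (w.take j) ++ (phi m (w.getD j 0) ++ phiW m (w.drop (j+1))) := by
    conv_lhs => rw [decomp m w j hj]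
    rw [phiW_append, phiW_cons]
  have hphi : phi m (w.getD j 0) = [0, w.getD j 0 + 1] := by unfold phi; rw [if_neg h]
  rw [hd, List.append_assoc, List.append_assoc,
    List.getD_append_right _ _ _ _ (show (phiW m (w.take j)).length ≤ pos m w j + 1 by
      unfold pos; omega)]
  have : pos m w j + 1 - (phiW m (w.take j)).length = 1 := by unfold pos; omega
  rw [this, hphi]
  rfl

lemma obs_iff (m : ℕ) (w e : List ℕ) (he : e = [] ∨ e = [0]) (j : ℕ) (hj : j < w.length) :
    w.getD j 0 = m - 1 ↔ (phiW m w ++ e).getD (pos m w j + 1) 0 = 0 := by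
  constructor
  · intro h
    have h1 : pos m w (j+1) = pos m w j + 1 := by
      rw [pos_succ m w j hj, blen_one m _ h]
    rw [← h1]
    exact v_zero m w e he (j+1)
  · intro h
    by_contra hne
    rw [v_snd m w e j hj hne] at h
    omega

/-- zeros in `phiW m w ++ e` occur only at block-start positions. -/
lemma zero_pos (m : ℕ) : ∀ (w : List ℕ) (e : List ℕ), (e = [] ∨ e = [0]) → ∀ p,
    p < (phiW m w).length + e.length → (phiW m w ++ e).getD p 0 = 0 →
    ∃ j, j ≤ w.length ∧ p = pos m w j := by
  intro w
  induction w with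
  | nil =>
    intro e he p hp _
    rcases he with he | he
    · rw [he] at hp; simp [phiW] at hp
    · rw [he] at hp
      simp [phiW] at hp
      exact ⟨0, by simp, by simp [hp, pos_zero]⟩
  | cons a w ih =>
    intro e he p hp hz
    have pos_cons : ∀ j, pos m (a :: w) (j+1) = (phi m a).length + pos m w j := by
      intro j
      unfold pos
      rw [List.take_succ_cons, phiW_cons]
      simp
    rcases Nat.eq_zero_or_pos p with hp0 | hp0
    · exact ⟨0, by simp, by simp [hp0, pos_zero]⟩
    by_cases hpL : p < (phi m a).length
    · exfalso
      have hL2 : (phi m a).length = 2 := by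
        have := phi_length_le m a
        omega
      have hane : a ≠ m - 1 := by
        intro h; rw [blen_one m a h] at hL2; omega
      have hphi : phi m a = [0, a + 1] := by unfold phi; rw [if_neg hane]
      have hp1 : p = 1 := by omega
      rw [phiW_cons, List.append_assoc, hphi, hp1] at hz
      simp at hz
    · push_neg at hpL
      have h1 : (phiW m (a :: w) ++ e).getD p 0 = (phiW m w ++ e).getD (p - (phi m a).length) 0 := by
        rw [phiW_cons, List.append_assoc, List.getD_append_right _ _ _ _ hpL]
      rw [h1] at hz
      have h2 : p - (phi m a).length < (phiW m w).length + e.length := by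
        have : (phiW m (a :: w)).length = (phi m a).length + (phiW m w).length := by
          rw [phiW_cons]; simp
        omega
      obtain ⟨j, hj, hpj⟩ := ih e he _ h2 hz
      exact ⟨j + 1, by simp only [List.length_cons]; omega, by rw [pos_cons j]; omega⟩

def Per (w : List ℕ) (p : ℕ) : Prop := ∀ i, i + p < w.length → w.getD i 0 = w.getD (i+p) 0

lemma pos_succ_lt (m : ℕ) (w e : List ℕ) (he : e = [] ∨ e = [0])
    (hlast : e = [] → w.getD (w.length - 1) 0 ≠ m - 1) (j : ℕ) (hj : j < w.length) :
    pos m w j + 1 < (phiW m w).length + e.length := by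
  by_cases h : w.getD j 0 = m - 1
  · have h1 : pos m w (j+1) = pos m w j + 1 := by rw [pos_succ m w j hj, blen_one m _ h]
    by_cases h2 : j + 1 < w.length
    · have := pos_strict m w h2 (show j + 1 < w.length from h2)
      have h3 : pos m w (j+1) < pos m w w.length := pos_strict m w h2 (by omega)
      rw [pos_top] at h3
      omega
    · have hj1 : j = w.length - 1 := by omega
      have he0 : e = [0] := by
        rcases he with he | he
        · exfalso; exact hlast he (hj1 ▸ h)
        · exact he
      have h3 : pos m w (j+1) ≤ (phiW m w).length := pos_le_phiW m w (j+1)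
      rw [he0]
      simp
      omega
  · have h1 : pos m w (j+1) = pos m w j + 2 := by rw [pos_succ m w j hj, blen_two m _ h]
    have h3 : pos m w (j+1) ≤ (phiW m w).length := pos_le_phiW m w (j+1)
    omega

/-- The key desubstitution lemma: a block-aligned period of `phiW m w ++ e`
descends to a period of `w`. -/
lemma desub (m : ℕ) (w e : List ℕ) (he : e = [] ∨ e = [0])
    (hlast : e = [] → w.getD (w.length - 1) 0 ≠ m - 1)
    (p p' : ℕ) (hp' : p' ≤ w.length) (hpp : p = pos m w p')
    (hPer : Per (phiW m w ++ e) p) : Per w p' := by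
  have hvlen : (phiW m w ++ e).length = (phiW m w).length + e.length := by simp
  -- the one-step lemma
  have step : ∀ i, i + p' < w.length → pos m w (i + p') = pos m w i + p →
      w.getD i 0 = w.getD (i + p') 0 ∧ pos m w (i+1+p') = pos m w (i+1) + p := by
    intro i hip hpos
    have hi : i < w.length := by omega
    have hobs : (phiW m w ++ e).getD (pos m w i + 1) 0
        = (phiW m w ++ e).getD (pos m w (i + p') + 1) 0 := by
      have hr : pos m w (i + p') + 1 = (pos m w i + 1) + p := by omega
      rw [hr]
      exact hPer (pos m w i + 1) (by
        rw [hvlen, ← hr]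
        exact pos_succ_lt m w e he hlast (i + p') hip)
    have hiff : (w.getD i 0 = m - 1) ↔ (w.getD (i + p') 0 = m - 1) := by
      rw [obs_iff m w e he i hi, obs_iff m w e he (i+p') hip, hobs]
    have hlet : w.getD i 0 = w.getD (i + p') 0 := by
      by_cases h : w.getD i 0 = m - 1
      · rw [h, (hiff.mp h)]
      · have h2 : w.getD (i + p') 0 ≠ m - 1 := fun hc => h (hiff.mpr hc)
        have e1 := v_snd m w e i hi h
        have e2 := v_snd m w e (i+p') hip h2
        rw [e1, e2] at hobs
        omega
    refine ⟨hlet, ?_⟩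
    have b1 : pos m w (i+1) = pos m w i + (phi m (w.getD i 0)).length := pos_succ m w i hi
    have b2 : pos m w (i+p'+1) = pos m w (i+p') + (phi m (w.getD (i+p') 0)).length :=
      pos_succ m w (i+p') hip
    have : i + 1 + p' = i + p' + 1 := by omega
    rw [this, b2, b1, hlet]
    omega
  -- the shift invariant
  have shift : ∀ i, i + p' ≤ w.length → pos m w (i + p') = pos m w i + p := by
    intro i
    induction i with
    | zero => intro _; simp only [Nat.zero_add, pos_zero]; omega
    | succ i ih =>
      intro h
      have h1 := ih (by omega)
      have h2 := step i (by omega) h1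
      have : i + 1 + p' = i + p' + 1 := by omega
      omega
  intro i hip
  exact (step i hip (shift i (by omega))).1

lemma Pb_head (m n : ℕ) : (Pb m n).getD 0 0 = 0 := by
  cases n with
  | zero => simp [Pb, ub]
  | succ n =>
    obtain ⟨t, ht⟩ := hb_head m n
    show (ub m (n+1) ++ [(n+1) % m]).getD 0 0 = 0
    show ((hb m n ++ ub m n) ++ [(n+1) % m]).getD 0 0 = 0
    rw [ht]
    rfl

lemma Pb_last (m n : ℕ) : (Pb m n).getD ((Pb m n).length - 1) 0 = n % m := by
  show (ub m n ++ [n % m]).getD ((ub m n ++ [n % m]).length - 1) 0 = n % m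
  have h : (ub m n ++ [n % m]).length - 1 = (ub m n).length := by simp
  rw [h, List.getD_append_right _ _ _ _ (le_refl _), Nat.sub_self]
  rfl

lemma periodM (m : ℕ) (hm : 2 ≤ m) : ∀ n p, 1 ≤ p → p < (hb m n).length → ¬ Per (Pb m n) p := by
  intro n
  induction n with
  | zero => intro p h1 h2 _; simp [hb] at h2; omega
  | succ n ih =>
    intro p hp1 hp2 hPer
    set e : List ℕ := if n % m = m - 1 then [0] else [] with he_def
    have he : e = [] ∨ e = [0] := by
      rw [he_def]; split
      · right; rfl
      · left; rfl
    have hv : Pb m (n+1) = phiW m (Pb m n) ++ e := Pb_phi m n hm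
    have hlen1 : (hb m (n+1)).length ≤ (Pb m (n+1)).length := by
      rw [Pb_length]; have := lenhb_le m hm (n+1); omega
    by_cases h0 : (Pb m (n+1)).getD p 0 = 0
    · -- p is block aligned; desubstitute
      have hvlen : (Pb m (n+1)).length = (phiW m (Pb m n)).length + e.length := by
        rw [hv]; simp
      obtain ⟨p', hp'le, hp'⟩ := zero_pos m (Pb m n) e he p (by omega)
        (by rw [← hv]; exact h0)
      have hp'1 : 1 ≤ p' := by
        rcases Nat.eq_zero_or_pos p' with h | h
        · exfalso; rw [h, pos_zero] at hp'; omega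
        · exact h
      have htk : (Pb m n).take (hb m n).length = hb m n := by
        obtain ⟨t, ht⟩ := hb_prefix_Pb m hm n
        rw [← ht, List.take_left]
      have hposhb : pos m (Pb m n) (hb m n).length = (hb m (n+1)).length := by
        unfold pos; rw [htk]; rfl
      have hp'lt : p' < (hb m n).length := by
        by_contra hcon
        push_neg at hcon
        have := pos_mono m (Pb m n) hcon
        omega
      have hlast : e = [] → (Pb m n).getD ((Pb m n).length - 1) 0 ≠ m - 1 := by
        intro hE hc
        rw [Pb_last] at hc
        rw [he_def, if_pos hc] at hE
        simp at hE
      have hdes := desub m (Pb m n) e he hlast p p' (by omega) hp'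
        (by rw [← hv]; exact hPer)
      exact ih p' hp'1 hp'lt hdes
    · -- nonzero letter at a period-image of position 0
      have h01 := hPer 0 (by omega)
      simp only [Nat.zero_add] at h01
      rw [Pb_head] at h01
      exact h0 h01.symm

lemma Per_prefix {w u : List ℕ} {p : ℕ} (h : Per w p) (hu : u <+: w) : Per u p := by
  intro i hip
  obtain ⟨t, ht⟩ := hu
  have h1 := h i (by rw [← ht]; simp; omega)
  rw [← ht, List.getD_append _ _ _ _ (by omega), List.getD_append _ _ _ _ hip] at h1
  exact h1

lemma border_period {w x : List ℕ} (hp : x <+: w) (hs : x <:+ w) :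
    Per w (w.length - x.length) := by
  obtain ⟨y, hy⟩ := hs
  obtain ⟨z, hz⟩ := hp
  intro i hip
  have hylen : y.length + x.length = w.length := by rw [← hy]; simp
  have hi : i < x.length := by omega
  have e1 : w.getD i 0 = x.getD i 0 := by rw [← hz, List.getD_append _ _ _ _ hi]
  have hidx : i + (w.length - x.length) = y.length + i := by omega
  have e2 : w.getD (y.length + i) 0 = x.getD i 0 := by
    rw [← hy, List.getD_append_right _ _ _ _ (by omega), Nat.add_sub_cancel_left]
  rw [e1, hidx, e2]

lemma occ_ge_three {x w : List ℕ} (i1 i2 i3 : ℕ) (h12 : i1 < i2) (h23 : i2 < i3)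
    (h3 : i3 ≤ w.length)
    (o1 : x.isPrefixOf (w.drop i1)) (o2 : x.isPrefixOf (w.drop i2))
    (o3 : x.isPrefixOf (w.drop i3)) : occ x w ≠ 2 := by
  intro hocc
  set l := (List.range (w.length + 1)).filter (fun i => x.isPrefixOf (w.drop i)) with hl
  have hnd : l.Nodup := List.Nodup.filter _ List.nodup_range
  have hmem : ∀ i, i ≤ w.length → x.isPrefixOf (w.drop i) → i ∈ l := by
    intro i hi ho
    rw [hl, List.mem_filter]
    exact ⟨List.mem_range.mpr (by omega), by simpa using ho⟩
  have hsub : ({i1, i2, i3} : Finset ℕ) ⊆ l.toFinset := by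
    intro i hi
    simp only [Finset.mem_insert, Finset.mem_singleton] at hi
    rw [List.mem_toFinset]
    rcases hi with h | h | h <;> subst h
    · exact hmem _ (by omega) o1
    · exact hmem _ (by omega) o2
    · exact hmem _ h3 o3
  have hcard : ({i1, i2, i3} : Finset ℕ).card = 3 := by
    rw [Finset.card_insert_of_notMem (by simp; omega),
      Finset.card_insert_of_notMem (by simp; omega), Finset.card_singleton]
  have := Finset.card_le_card hsub
  rw [List.toFinset_card_of_nodup hnd] at this
  have : 3 ≤ l.length := by omega
  have hocc' : occ x w = l.length := rfl
  omega

end MB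


/-- a prefix `w` of the `m`-bonacci word `h_ω` with
`|u_n| < |w| ≤ |u_n| + |t_n|` (a type-2 prefix) is open, i.e. not closed
(here `ub m k` is the paper's `u_{k+1}`, and prefixes of `h_ω` are exactly the
prefixes of the finite nested words `h_k`). -/
theorem type2_prefix_open :
    ∀ m : ℕ, 2 ≤ m → ∀ n : ℕ, 2 ≤ n → ∀ w : List ℕ,
      (∃ k : ℕ, w <+: hb m k) →
      (ub m (n - 1)).length < w.length →
      w.length ≤ (ub m (n - 1)).length + (tb m n).length →
      ¬ ClosedWord w := by
  intro m hm n hn w hk hlow hhigh hC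
  obtain ⟨k, hwk⟩ := hk
  have hmono : (hb m (n-2)).length ≤ (hb m (n-1)).length :=
    (MB.hb_prefix m (by omega)).length_le
  have hub1 : ub m (n-1) = hb m (n-2) ++ ub m (n-2) := by
    have h : n - 1 = (n-2) + 1 := by omega
    rw [h]; rfl
  have hub12 : (ub m (n-1)).length = (hb m (n-2)).length + (ub m (n-2)).length := by
    rw [hub1]; simp
  have hbpos : 0 < (hb m (n-2)).length :=
    List.length_pos_iff.mpr (MB.hb_ne_nil m (n-2))
  have htb : (tb m n).length = (hb m (n-1)).length - (hb m (n-2)).length := by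
    unfold tb
    rw [List.length_take, List.length_reverse]
    omega
  rcases hC with h1 | ⟨x, hxne, hxlt, hxpre, hxsuf, hocc⟩
  · omega
  -- common ambient word
  have hn1 : (n - 1) + 1 = n := by omega
  have hwK : w <+: hb m (max k n) := hwk.trans (MB.hb_prefix m (le_max_left _ _))
  have hPbK : MB.Pb m (n-1) <+: hb m (max k n) := by
    refine (MB.Pb_prefix m hm (n-1)).trans ?_
    rw [hn1]
    exact MB.hb_prefix m (le_max_right _ _)
  have hubK : ub m (n-1) <+: hb m (max k n) :=
    (List.prefix_append _ [(n-1) % m]).trans hPbK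
  have hubw : ub m (n-1) <+: w :=
    List.prefix_of_prefix_length_le hubK hwK (by omega)
  by_cases hxle : x.length ≤ (ub m (n-2)).length
  · -- short border: at least three occurrences
    have hub2K : ub m (n-2) <+: hb m (max k n) := by
      have h2 : MB.Pb m (n-2) <+: hb m (max k n) := by
        refine (MB.Pb_prefix m hm (n-2)).trans ?_
        exact MB.hb_prefix m (by omega)
      exact (List.prefix_append _ [(n-2) % m]).trans h2
    have hxub2 : x <+: ub m (n-2) :=
      List.prefix_of_prefix_length_le (hxpre.trans hwK) hub2K hxle
    obtain ⟨r, hr⟩ := hubw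
    obtain ⟨y, hy⟩ := hxsuf
    have hylen : y.length + x.length = w.length := by rw [← hy]; simp
    have o1 : x.isPrefixOf (w.drop 0) := by
      rw [List.drop_zero]
      exact List.isPrefixOf_iff_prefix.mpr hxpre
    have o2 : x.isPrefixOf (w.drop (hb m (n-2)).length) := by
      have hw2 : w = hb m (n-2) ++ (ub m (n-2) ++ r) := by
        rw [← hr, hub1]; simp
      rw [hw2, List.drop_left]
      exact List.isPrefixOf_iff_prefix.mpr (hxub2.trans (List.prefix_append _ _))
    have o3 : x.isPrefixOf (w.drop y.length) := by
      rw [← hy, List.drop_left]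
      exact List.isPrefixOf_iff_prefix.mpr (List.prefix_refl x)
    have hy3 : y.length = w.length - x.length := by omega
    refine MB.occ_ge_three 0 (hb m (n-2)).length y.length hbpos (by omega) (by omega)
      o1 o2 o3 hocc
  · -- long border: gives a short forbidden period
    push_neg at hxle
    set p := w.length - x.length with hp_def
    have hp1 : 1 ≤ p := by omega
    have hp2 : p < (hb m (n-1)).length := by omega
    have hPerw : MB.Per w p := MB.border_period hxpre hxsuf
    have hPbw : MB.Pb m (n-1) <+: w :=
      List.prefix_of_prefix_length_le hPbK hwK (by rw [MB.Pb_length]; omega)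
    exact MB.periodM m hm (n-1) p hp1 hp2 (MB.Per_prefix hPerw hPbw)
end
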